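/- The inclusion functor U from the category of finite sets and surjections into the category of finite sets (with all maps), extended to formal coproduct completions, is left adjoint to the functor φ sending a finite set S to the formal coproduct ∐_{U ⊆ S} U: for every finite set V and finite set S there is a natural bijection between surjections-after-choice data Hom_{F_Fsurj}(V, φ(S)) and functions Hom_F(V, S). -/
import Mathlib


/-- The inclusion of finite sets-and-surjections into finite sets (extended to
formal coproduct completions) is left adjoint to `φ : S ↦ ∐_{U ⊆ S} U`: for
finite sets `V` and `S`, morphisms `V → φ(S)` in the formal coproduct
completion of surjections — i.e. pairs of a subset `U ⊆ S` together with a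
surjection `V ↠ U` — correspond bijectively to functions `V → S`, by
postcomposing with the inclusion `U ⊆ S`. -/
theorem stmt7 {V S : Type} [Finite V] [Finite S] :
    Function.Bijective
      (fun (p : Σ U : Set S, {f : V → U // Function.Surjective f}) (v : V) =>
        ((p.2.1 v : S))) := by
  constructor
  · rintro ⟨U₁, f₁, hf₁⟩ ⟨U₂, f₂, hf₂⟩ h
    simp only at h
    have hU : U₁ = U₂ := by
      ext s
      constructor
      · intro hs
        obtain ⟨v, hv⟩ := hf₁ ⟨s, hs⟩
        have := congrFun h v
        rw [hv] at this
        simpa [← this] using (f₂ v).2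
      · intro hs
        obtain ⟨v, hv⟩ := hf₂ ⟨s, hs⟩
        have := congrFun h v
        rw [hv] at this
        simpa [this] using (f₁ v).2
    subst hU
    have : f₁ = f₂ := by
      funext v
      exact Subtype.ext (congrFun h v)
    simp [this]
  · intro g
    refine ⟨⟨Set.range g, fun v => ⟨g v, ⟨v, rfl⟩⟩, ?_⟩, rfl⟩
    rintro ⟨s, v, rfl⟩
    exact ⟨v, rfl⟩
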